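/- For a non-attacking filling σ of μ, a triple (u,v,w) is a co-inversion triple (i.e., χ_{uv} + χ_{vw} − χ_{uw} = 0) if and only if the three distinct values satisfy σ̂(u) < σ̂(v) < σ̂(w), or σ̂(v) < σ̂(w) < σ̂(u), or σ̂(w) < σ̂(u) < σ̂(v). -/

import Mathlib

open Finset

noncomputable section
attribute [local instance] Classical.propDecidable

/-- `u` lies in the column diagram of the composition `μ` (columns `1,…,n`). -/
def dgIn (n : ℕ) (μ : ℕ → ℕ) (u : ℕ × ℕ) : Prop :=
  1 ≤ u.1 ∧ u.1 ≤ n ∧ 1 ≤ u.2 ∧ u.2 ≤ μ u.1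

/-- `u` lies in the augmented diagram of `μ` (row `0` added). -/
def augIn (n : ℕ) (μ : ℕ → ℕ) (u : ℕ × ℕ) : Prop :=
  1 ≤ u.1 ∧ u.1 ≤ n ∧ u.2 ≤ μ u.1

/-- The column diagram of `μ` as a finite set. -/
def dgF (n : ℕ) (μ : ℕ → ℕ) : Finset (ℕ × ℕ) :=
  (Finset.Icc 1 n).biUnion (fun i => (Finset.Icc 1 (μ i)).image (fun j => (i, j)))

/-- The augmented diagram of `μ` as a finite set. -/
def augF (n : ℕ) (μ : ℕ → ℕ) : Finset (ℕ × ℕ) :=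
  (Finset.Icc 1 n).biUnion (fun i => (Finset.Icc 0 (μ i)).image (fun j => (i, j)))

/-- The box directly below `u`. -/
def dbox (u : ℕ × ℕ) : ℕ × ℕ := (u.1, u.2 - 1)

/-- `v` belongs to the arm of `u` (left arm or right arm). -/
def armIn (n : ℕ) (μ : ℕ → ℕ) (u v : ℕ × ℕ) : Prop :=
  (dgIn n μ v ∧ v.2 = u.2 ∧ v.1 < u.1 ∧ μ v.1 ≤ μ u.1) ∨
  (augIn n μ v ∧ v.2 + 1 = u.2 ∧ u.1 < v.1 ∧ μ v.1 < μ u.1)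

/-- The arm of `u` as a finite set. -/
def armF (n : ℕ) (μ : ℕ → ℕ) (u : ℕ × ℕ) : Finset (ℕ × ℕ) :=
  (augF n μ).filter (fun v => armIn n μ u v)

/-- The leg length `l(u) = μ_i - j`. -/
def legLen (μ : ℕ → ℕ) (u : ℕ × ℕ) : ℕ := μ u.1 - u.2

/-- The arm length `a(u) = |arm(u)|`. -/
def armLen (n : ℕ) (μ : ℕ → ℕ) (u : ℕ × ℕ) : ℕ := (armF n μ u).card

/-- Two distinct boxes attack each other: same row, or consecutive rows with
the lower box strictly to the right. -/
def attacks (u v : ℕ × ℕ) : Prop :=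
  u ≠ v ∧ (u.2 = v.2 ∨ (u.2 = v.2 + 1 ∧ u.1 < v.1) ∨ (v.2 = u.2 + 1 ∧ v.1 < u.1))

/-- Reading order: rows top to bottom, right to left within a row. -/
def rlt (u v : ℕ × ℕ) : Prop := v.2 < u.2 ∨ (u.2 = v.2 ∧ v.1 < u.1)

/-- The augmented filling: value `i` in the row-0 box `(i,0)`. -/
def augOf (σ : ℕ × ℕ → ℕ) : ℕ × ℕ → ℕ := fun u => if u.2 = 0 then u.1 else σ u

/-- The (augmented) filling is non-attacking. -/
def NonAttacking (n : ℕ) (μ : ℕ → ℕ) (σh : ℕ × ℕ → ℕ) : Prop :=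
  ∀ u v : ℕ × ℕ, augIn n μ u → augIn n μ v → attacks u v → σh u ≠ σh v

/-- The set of inversions of an augmented filling: attacking pairs,
earlier box (in reading order) having the larger entry. -/
def invF (n : ℕ) (μ : ℕ → ℕ) (σh : ℕ × ℕ → ℕ) : Finset ((ℕ × ℕ) × (ℕ × ℕ)) :=
  ((augF n μ) ×ˢ (augF n μ)).filter
    (fun p => attacks p.1 p.2 ∧ rlt p.1 p.2 ∧ σh p.2 < σh p.1)

/-- The descent set of an augmented filling. -/
def desF (n : ℕ) (μ : ℕ → ℕ) (σh : ℕ × ℕ → ℕ) : Finset (ℕ × ℕ) :=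
  (dgF n μ).filter (fun u => σh (dbox u) < σh u)

/-- maj = sum of `l(u)+1` over descents. -/
def majStat (n : ℕ) (μ : ℕ → ℕ) (σh : ℕ × ℕ → ℕ) : ℕ :=
  ∑ u ∈ desF n μ σh, (legLen μ u + 1)

/-- `χ_{xy} = 1` iff the earlier box in reading order carries the larger entry. -/
def chi (σh : ℕ × ℕ → ℕ) (x y : ℕ × ℕ) : ℕ :=
  if (rlt x y ∧ σh y < σh x) ∨ (rlt y x ∧ σh x < σh y) then 1 else 0

/-- Triples `(u, v, d(u))`, encoded by the pair `(u, v)` with `v ∈ arm(u)`. -/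
def triplesF (n : ℕ) (μ : ℕ → ℕ) : Finset ((ℕ × ℕ) × (ℕ × ℕ)) :=
  ((dgF n μ) ×ˢ (augF n μ)).filter (fun p => armIn n μ p.1 p.2)

/-- Inversion triples: `χ_{uv} + χ_{vw} - χ_{uw} = 1` where `w = d(u)`. -/
def invTriplesF (n : ℕ) (μ : ℕ → ℕ) (σh : ℕ × ℕ → ℕ) : Finset ((ℕ × ℕ) × (ℕ × ℕ)) :=
  (triplesF n μ).filter
    (fun p => chi σh p.1 p.2 + chi σh p.2 (dbox p.1) = chi σh p.1 (dbox p.1) + 1)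

/-- Co-inversion triples: `χ_{uv} + χ_{vw} - χ_{uw} = 0` where `w = d(u)`. -/
def coinvTriplesF (n : ℕ) (μ : ℕ → ℕ) (σh : ℕ × ℕ → ℕ) : Finset ((ℕ × ℕ) × (ℕ × ℕ)) :=
  (triplesF n μ).filter
    (fun p => chi σh p.1 p.2 + chi σh p.2 (dbox p.1) = chi σh p.1 (dbox p.1))

/-- coinv = number of co-inversion triples. -/
def coinvStat (n : ℕ) (μ : ℕ → ℕ) (σh : ℕ × ℕ → ℕ) : ℕ := (coinvTriplesF n μ σh).card

/-- `σ` is a filling of `μ`, i.e. takes values in `[n]` on the diagram. -/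
def IsFilling (n : ℕ) (μ : ℕ → ℕ) (σ : ℕ × ℕ → ℕ) : Prop :=
  ∀ u : ℕ × ℕ, dgIn n μ u → 1 ≤ σ u ∧ σ u ≤ n

/-! In reading order the boxes of a triple come as `u`, then `v`, then `w = d(u)`, so each `χ`
is the indicator of a descent of the word `σ̂(u) σ̂(v) σ̂(w)`. Non-attacking makes adjacent
letters distinct, and on such a word `χ_{uv} + χ_{vw} = χ_{uw}` singles out exactly the three
cyclic rotations of the increasing word. -/

theorem descent_add_descent_eq_descent_iff {α : Type*} [LinearOrder α] {a b c : α}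
    (hab : a ≠ b) (hbc : b ≠ c) :
    ((if b < a then 1 else 0) + (if c < b then 1 else 0) = (if c < a then 1 else 0 : ℕ)) ↔
      (a < b ∧ b < c) ∨ (b < c ∧ c < a) ∨ (c < a ∧ a < b) := by
  rcases hab.lt_or_gt with hab | hab <;> rcases hbc.lt_or_gt with hbc | hbc <;>
    rcases lt_trichotomy c a with hca | rfl | hca <;>
    simp [lt_asymm, *] <;> order

theorem rlt_asymm {u v : ℕ × ℕ} (h : rlt u v) : ¬ rlt v u := by
  unfold rlt at *
  omega

theorem chi_of_rlt {σh : ℕ × ℕ → ℕ} {x y : ℕ × ℕ} (h : rlt x y) :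
    chi σh x y = if σh y < σh x then 1 else 0 := by
  simp [chi, h, rlt_asymm h]

theorem mem_dgF_iff {n : ℕ} {μ : ℕ → ℕ} {u : ℕ × ℕ} :
    u ∈ dgF n μ ↔ dgIn n μ u := by
  simp only [dgF, dgIn, mem_biUnion, mem_image, mem_Icc]
  constructor
  · rintro ⟨i, hi, j, hj, rfl⟩
    exact ⟨hi.1, hi.2, hj.1, hj.2⟩
  · rintro ⟨h1, h2, h3, h4⟩
    exact ⟨u.1, ⟨h1, h2⟩, u.2, ⟨h3, h4⟩, rfl⟩

section Triple

variable {n : ℕ} {μ : ℕ → ℕ} {u v : ℕ × ℕ}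

theorem augIn_of_dgIn (hu : dgIn n μ u) : augIn n μ u :=
  ⟨hu.1, hu.2.1, hu.2.2.2⟩

theorem augIn_dbox (hu : dgIn n μ u) : augIn n μ (dbox u) :=
  ⟨hu.1, hu.2.1, Nat.sub_le_of_le_add (Nat.le_add_right_of_le hu.2.2.2)⟩

theorem rlt_dbox (hu : dgIn n μ u) : rlt u (dbox u) := by
  unfold rlt dbox
  have := hu.2.2.1
  omega

theorem augIn_of_armIn (h : armIn n μ u v) : augIn n μ v := by
  rcases h with ⟨hv, -⟩ | ⟨hv, -⟩
  exacts [augIn_of_dgIn hv, hv]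

theorem rlt_of_armIn (h : armIn n μ u v) : rlt u v := by
  unfold rlt
  rcases h with ⟨-, h2, h1, -⟩ | ⟨-, h2, -⟩ <;> omega

theorem rlt_dbox_of_armIn (h : armIn n μ u v) : rlt v (dbox u) := by
  unfold rlt dbox
  rcases h with ⟨hv, h2, h1, -⟩ | ⟨-, h2, h1, -⟩
  · have := hv.2.2.1
    omega
  · omega

theorem attacks_of_armIn (h : armIn n μ u v) : attacks u v := by
  simp only [attacks, ne_eq, Prod.ext_iff]
  rcases h with ⟨-, h2, h1, -⟩ | ⟨-, h2, h1, -⟩ <;> omega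

theorem attacks_dbox_of_armIn (hu : dgIn n μ u) (h : armIn n μ u v) : attacks v (dbox u) := by
  have := hu.2.2.1
  simp only [attacks, dbox, ne_eq, Prod.ext_iff]
  rcases h with ⟨-, h2, h1, -⟩ | ⟨-, h2, h1, -⟩ <;> omega

end Triple

theorem coinv_triple_iff_general (n : ℕ) (μ : ℕ → ℕ) (σ : ℕ × ℕ → ℕ)
    (hna : NonAttacking n μ (augOf σ))
    (p : (ℕ × ℕ) × (ℕ × ℕ)) (hp : p ∈ triplesF n μ) :
    (chi (augOf σ) p.1 p.2 + chi (augOf σ) p.2 (dbox p.1)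
        = chi (augOf σ) p.1 (dbox p.1)) ↔
      ((augOf σ p.1 < augOf σ p.2 ∧ augOf σ p.2 < augOf σ (dbox p.1)) ∨
       (augOf σ p.2 < augOf σ (dbox p.1) ∧ augOf σ (dbox p.1) < augOf σ p.1) ∨
       (augOf σ (dbox p.1) < augOf σ p.1 ∧ augOf σ p.1 < augOf σ p.2)) := by
  obtain ⟨u, v⟩ := p
  obtain ⟨huv, harm⟩ := mem_filter.mp hp
  have hu : dgIn n μ u := mem_dgF_iff.mp (mem_product.mp huv).1
  have hv : augIn n μ v := augIn_of_armIn harm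
  rw [chi_of_rlt (rlt_of_armIn harm), chi_of_rlt (rlt_dbox_of_armIn harm), chi_of_rlt (rlt_dbox hu)]
  -- `convert` only has to identify the `Decidable` instances of the `ite`s.
  convert descent_add_descent_eq_descent_iff
    (hna u v (augIn_of_dgIn hu) hv (attacks_of_armIn harm))
    (hna v (dbox u) hv (augIn_dbox hu) (attacks_dbox_of_armIn hu harm))

/-- in a non-attacking filling, a triple `(u, v, w = d(u))` is a
co-inversion triple iff its (distinct) entries increase cyclically as stated. -/
theorem coinv_triple_iff (n : ℕ) (μ : ℕ → ℕ) (σ : ℕ × ℕ → ℕ)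
    (hσ : IsFilling n μ σ) (hna : NonAttacking n μ (augOf σ))
    (p : (ℕ × ℕ) × (ℕ × ℕ)) (hp : p ∈ triplesF n μ) :
    (chi (augOf σ) p.1 p.2 + chi (augOf σ) p.2 (dbox p.1)
        = chi (augOf σ) p.1 (dbox p.1)) ↔
      ((augOf σ p.1 < augOf σ p.2 ∧ augOf σ p.2 < augOf σ (dbox p.1)) ∨
       (augOf σ p.2 < augOf σ (dbox p.1) ∧ augOf σ (dbox p.1) < augOf σ p.1) ∨
       (augOf σ (dbox p.1) < augOf σ p.1 ∧ augOf σ p.1 < augOf σ p.2)) :=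
  coinv_triple_iff_general n μ σ hna p hp
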